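/- Let g be a metric on ℝⁿ that is log concave in the sense of Nakano (respectively Griffiths), and let f : ℝⁿ → ℝ be a strictly positive, twice differentiable log concave function. Then the metric f·g is log concave in the sense of Nakano (respectively Griffiths). -/

import Mathlib

open scoped ComplexOrder
open Matrix MeasureTheory

section Preamble

variable {ι : Type*} [Fintype ι] [DecidableEq ι] {r : ℕ}

/-- Partial derivative of a complex-valued function on `ι → ℝ` in direction `j`. -/
noncomputable def pdC (j : ι) (f : (ι → ℝ) → ℂ) (x : ι → ℝ) : ℂ :=
  fderiv ℝ f x (Pi.single j 1)

/-- Partial derivative of a real-valued function on `ι → ℝ` in direction `j`. -/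
noncomputable def pdR (j : ι) (f : (ι → ℝ) → ℝ) (x : ι → ℝ) : ℝ :=
  fderiv ℝ f x (Pi.single j 1)

/-- Entrywise partial derivative of a matrix-valued function. -/
noncomputable def mpd (j : ι) (g : (ι → ℝ) → Matrix (Fin r) (Fin r) ℂ) (x : ι → ℝ) :
    Matrix (Fin r) (Fin r) ℂ :=
  Matrix.of fun a b => pdC j (fun y => g y a b) x

/-- The curvature-type quantity `Θ_{jk} = ∂_{x_k}(g⁻¹ ∂_{x_j} g)`. -/
noncomputable def Theta (g : (ι → ℝ) → Matrix (Fin r) (Fin r) ℂ) (j k : ι) (x : ι → ℝ) :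
    Matrix (Fin r) (Fin r) ℂ :=
  mpd k (fun y => (g y)⁻¹ * mpd j g y) x

/-- The pairing `(u, v)_g = v* g u`. -/
noncomputable def ip (g : Matrix (Fin r) (Fin r) ℂ) (u v : Fin r → ℂ) : ℂ :=
  star v ⬝ᵥ g.mulVec u

/-- A metric: twice differentiable entries, Hermitian positive definite values. -/
def IsMetric (g : (ι → ℝ) → Matrix (Fin r) (Fin r) ℂ) : Prop :=
  (∀ x, (g x).PosDef) ∧ ∀ a b, ContDiff ℝ 2 fun x => g x a b

/-- Log concavity in the sense of Nakano. -/
def NakanoLogConcave (g : (ι → ℝ) → Matrix (Fin r) (Fin r) ℂ) : Prop :=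
  ∀ (x : ι → ℝ) (u : ι → Fin r → ℂ),
    ∑ j, ∑ k, ip (g x) ((Theta g j k x).mulVec (u j)) (u k) ≤ 0

/-- Log concavity in the sense of Griffiths. -/
def GriffithsLogConcave (g : (ι → ℝ) → Matrix (Fin r) (Fin r) ℂ) : Prop :=
  ∀ (x : ι → ℝ) (u : Fin r → ℂ) (v : ι → ℂ),
    ∑ j, ∑ k, ip (g x) ((Theta g j k x).mulVec u) u * (v j * star (v k)) ≤ 0

end Preamble

/-! Since `(f g)⁻¹ ∂ⱼ(f g) = ∂ⱼ(log f) I + g⁻¹ ∂ⱼ g`, the curvature of `f g` is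
`Θ^g_{jk} + H_{jk} I` with `H` the Hessian of `log f`. Hence the Nakano form of `f g` at `u` is
`f` times the sum of the Nakano form of `g` at `u` and `∑ H_{jk} (u_j, u_k)_g`. Concavity of
`log f` makes `-H` positive semidefinite, so this extra term is minus the quadratic form of the
positive semidefinite Kronecker product `(-H)ᵀ ⊗ g` at the flattening of `u`. The Griffiths form
is the Nakano form at `u_j = v_j u`. -/

open scoped Kronecker

section Kronecker

variable {ι : Type*} [Fintype ι] {r : ℕ}

open scoped MatrixOrder in
lemma Matrix.PosSemidef.map_ofReal [DecidableEq ι] {A : Matrix ι ι ℝ} (hA : A.PosSemidef) :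
    (A.map ((↑) : ℝ → ℂ)).PosSemidef := by
  obtain ⟨D, rfl⟩ := CStarAlgebra.nonneg_iff_eq_star_mul_self.mp hA.nonneg
  change ((Dᴴ * D).map Complex.ofRealHom).PosSemidef
  rw [Matrix.map_mul,
    conjTranspose_map (⇑Complex.ofRealHom) fun _ => (Complex.conj_ofReal _).symm]
  exact posSemidef_conjTranspose_mul_self _

lemma star_dotProduct_kronecker_mulVec (A : Matrix ι ι ℂ) (M : Matrix (Fin r) (Fin r) ℂ)
    (u : ι → Fin r → ℂ) :
    star (fun p : ι × Fin r => u p.1 p.2) ⬝ᵥ (A ⊗ₖ M) *ᵥ (fun p => u p.1 p.2) =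
      ∑ j, ∑ k, A k j * ip M (u j) (u k) := by
  simp only [ip, dotProduct, mulVec, kroneckerMap_apply, Fintype.sum_prod_type, Pi.star_apply,
    Finset.mul_sum]
  conv_lhs => enter [2, k]; rw [Finset.sum_comm]
  rw [Finset.sum_comm]
  refine Finset.sum_congr rfl fun j _ => Finset.sum_congr rfl fun k _ =>
    Finset.sum_congr rfl fun b _ => Finset.sum_congr rfl fun a _ => by ring

lemma sum_sum_mul_ip_nonneg {A : Matrix ι ι ℂ} (hA : A.PosSemidef)
    {M : Matrix (Fin r) (Fin r) ℂ} (hM : M.PosSemidef) (u : ι → Fin r → ℂ) :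
    0 ≤ ∑ j, ∑ k, A k j * ip M (u j) (u k) := by
  rw [← star_dotProduct_kronecker_mulVec A M u]
  exact (hA.kronecker hM).dotProduct_mulVec_nonneg _

end Kronecker

section Differentiability

variable {𝕜 : Type*} [NontriviallyNormedField 𝕜] {𝕜' : Type*} [NontriviallyNormedField 𝕜']
  [NormedAlgebra 𝕜 𝕜'] {E : Type*} [NormedAddCommGroup E] [NormedSpace 𝕜 E]
  {m : Type*} [Fintype m] {M N : E → Matrix m m 𝕜'} {x : E}

lemma DifferentiableAt.matrix_mul_apply (hM : ∀ a b, DifferentiableAt 𝕜 (fun y => M y a b) x)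
    (hN : ∀ a b, DifferentiableAt 𝕜 (fun y => N y a b) x) (a b : m) :
    DifferentiableAt 𝕜 (fun y => (M y * N y) a b) x := by
  simp only [Matrix.mul_apply]
  exact .fun_sum fun c _ => (hM a c).mul (hN c b)

variable [DecidableEq m]

lemma DifferentiableAt.matrix_det (hM : ∀ a b, DifferentiableAt 𝕜 (fun y => M y a b) x) :
    DifferentiableAt 𝕜 (fun y => (M y).det) x := by
  simp only [Matrix.det_apply, Units.smul_def, zsmul_eq_mul]
  exact .fun_sum fun σ _ => (differentiableAt_const _).mul
    (HasFDerivAt.finsetProd fun i _ => (hM (σ i) i).hasFDerivAt).differentiableAt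

lemma DifferentiableAt.matrix_inv_apply (hM : ∀ a b, DifferentiableAt 𝕜 (fun y => M y a b) x)
    (hdet : (M x).det ≠ 0) (a b : m) : DifferentiableAt 𝕜 (fun y => (M y)⁻¹ a b) x := by
  simp only [Matrix.inv_def, Ring.inverse_eq_inv, Matrix.smul_apply, smul_eq_mul,
    Matrix.adjugate_apply]
  refine ((DifferentiableAt.matrix_det hM).inv hdet).mul (.matrix_det fun i k => ?_)
  by_cases hib : i = b <;> simp [Matrix.updateRow_apply, hib, hM]

end Differentiability

section PartialDerivatives

variable {ι : Type*} [DecidableEq ι] {r : ℕ} {x : ι → ℝ} (j : ι)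

lemma mpd_const (M : Matrix (Fin r) (Fin r) ℂ) : mpd j (fun _ => M) x = 0 := by
  ext a b
  simp [mpd, pdC]

variable [Fintype ι]

lemma pdC_ofReal {f : (ι → ℝ) → ℝ} (hf : DifferentiableAt ℝ f x) :
    pdC j (fun y => (f y : ℂ)) x = pdR j f x := by
  have h : HasFDerivAt (fun y => (f y : ℂ)) (Complex.ofRealCLM.comp (fderiv ℝ f x)) x :=
    Complex.ofRealCLM.hasFDerivAt.comp x hf.hasFDerivAt
  simp [pdC, pdR, h.fderiv]

lemma pdC_mul {f h : (ι → ℝ) → ℂ} (hf : DifferentiableAt ℝ f x) (hh : DifferentiableAt ℝ h x) :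
    pdC j (fun y => f y * h y) x = pdC j f x * h x + f x * pdC j h x := by
  simp only [pdC, fderiv_fun_mul hf hh, _root_.add_apply, _root_.smul_apply, smul_eq_mul]
  ring

lemma pdR_log {f : (ι → ℝ) → ℝ} (hf : DifferentiableAt ℝ f x) (hx : f x ≠ 0) :
    pdR j (fun y => Real.log (f y)) x = pdR j f x / f x := by
  simp [pdR, hf.hasFDerivAt.log hx |>.fderiv, div_eq_inv_mul]

lemma ContDiff.pdR_succ {n : ℕ} {f : (ι → ℝ) → ℝ} (hf : ContDiff ℝ (n + 1) f) :
    ContDiff ℝ n (pdR j f) :=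
  (hf.fderiv_right le_rfl).clm_apply contDiff_const

lemma ContDiff.pdC_succ {n : ℕ} {f : (ι → ℝ) → ℂ} (hf : ContDiff ℝ (n + 1) f) :
    ContDiff ℝ n (pdC j f) :=
  (hf.fderiv_right le_rfl).clm_apply contDiff_const

lemma mpd_add {A B : (ι → ℝ) → Matrix (Fin r) (Fin r) ℂ}
    (hA : ∀ a b, DifferentiableAt ℝ (fun y => A y a b) x)
    (hB : ∀ a b, DifferentiableAt ℝ (fun y => B y a b) x) :
    mpd j (fun y => A y + B y) x = mpd j A x + mpd j B x := by
  ext a b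
  simp [mpd, pdC, fderiv_fun_add (hA a b) (hB a b)]

lemma mpd_ofReal_smul {f : (ι → ℝ) → ℝ} {g : (ι → ℝ) → Matrix (Fin r) (Fin r) ℂ}
    (hf : DifferentiableAt ℝ f x) (hg : ∀ a b, DifferentiableAt ℝ (fun y => g y a b) x) :
    mpd j (fun y => (f y : ℂ) • g y) x = (pdR j f x : ℂ) • g x + (f x : ℂ) • mpd j g x := by
  ext a b
  have hf' : DifferentiableAt ℝ (fun y => (f y : ℂ)) x :=
    Complex.ofRealCLM.differentiableAt.comp x hf
  simp only [mpd, Matrix.of_apply, Matrix.smul_apply, Matrix.add_apply, smul_eq_mul]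
  rw [pdC_mul j hf' (hg a b), pdC_ofReal j hf]

lemma mpd_ofReal_smul_one {f : (ι → ℝ) → ℝ} (hf : DifferentiableAt ℝ f x) :
    mpd j (fun y => (f y : ℂ) • (1 : Matrix (Fin r) (Fin r) ℂ)) x = (pdR j f x : ℂ) • 1 := by
  rw [mpd_ofReal_smul (g := fun _ => 1) j hf fun _ _ => differentiableAt_const _, mpd_const,
    smul_zero, add_zero]

end PartialDerivatives

section Hessian

lemma ConcaveOn.fderiv_fderiv_apply_self_nonpos {E : Type*} [NormedAddCommGroup E]
    [NormedSpace ℝ E] {L : E → ℝ} (hc : ConcaveOn ℝ Set.univ L) (hL : Differentiable ℝ L)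
    {x : E} (hL' : DifferentiableAt ℝ (fderiv ℝ L) x) (w : E) :
    fderiv ℝ (fderiv ℝ L) x w w ≤ 0 := by
  set γ : ℝ →ᵃ[ℝ] E := AffineMap.lineMap x (x + w)
  have hγ : ∀ t, HasDerivAt γ w t := fun t => by
    simpa [γ] using AffineMap.hasDerivAt_lineMap (a := x) (b := x + w) (x := t)
  have hγ0 : γ 0 = x := AffineMap.lineMap_apply_zero _ _
  have hanti : Antitone fun t => fderiv ℝ L (γ t) w := by
    have hφ : ∀ t, HasDerivAt (L ∘ γ) (fderiv ℝ L (γ t) w) t := fun t =>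
      (hL (γ t)).hasFDerivAt.comp_hasDerivAt t (hγ t)
    have := (hc.comp_affineMap γ).antitoneOn_deriv fun t _ => (hφ t).differentiableAt
    intro s t hst
    simpa only [(hφ _).deriv] using this (Set.mem_univ s) (Set.mem_univ t) hst
  have hderiv : HasDerivAt (fun t => fderiv ℝ L (γ t) w) (fderiv ℝ (fderiv ℝ L) x w w) 0 := by
    rw [← hγ0] at hL' ⊢
    exact ((hL'.hasFDerivAt.comp_hasDerivAt 0 (hγ 0)).clm_apply (hasDerivAt_const 0 w)).congr_deriv
      (by simp)
  simpa only [hderiv.deriv] using hanti.deriv_nonpos (x := 0)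

variable {ι : Type*} [Fintype ι] [DecidableEq ι]

noncomputable def hessianMatrix (L : (ι → ℝ) → ℝ) (x : ι → ℝ) : Matrix ι ι ℝ :=
  Matrix.of fun j k => pdR k (pdR j L) x

lemma hessianMatrix_eq_toMatrix₂' {L : (ι → ℝ) → ℝ} {x : ι → ℝ} (hL : ContDiff ℝ 2 L) :
    hessianMatrix L x = LinearMap.toMatrix₂' ℝ (fderiv ℝ (fderiv ℝ L) x).toLinearMap₁₂ := by
  have hL' : DifferentiableAt ℝ (fderiv ℝ L) x :=
    (hL.fderiv_right (m := 1) le_rfl).differentiable one_ne_zero x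
  ext j k
  change fderiv ℝ (fun y => fderiv ℝ L y (Pi.single j 1)) x (Pi.single k 1) = _
  rw [fderiv_clm_apply hL' (differentiableAt_const _)]
  simpa using (hL.contDiffAt.isSymmSndFDerivAt (by simp)) _ _

lemma ConcaveOn.posSemidef_neg_hessianMatrix {L : (ι → ℝ) → ℝ} (hc : ConcaveOn ℝ Set.univ L)
    (hL : ContDiff ℝ 2 L) (x : ι → ℝ) : (-hessianMatrix L x).PosSemidef := by
  set B := fderiv ℝ (fderiv ℝ L) x
  have hsymm : ∀ v w, B v w = B w v := hL.contDiffAt.isSymmSndFDerivAt (by simp)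
  refine .of_dotProduct_mulVec_nonneg ?_ fun w => ?_
  · ext j k
    simpa [hessianMatrix_eq_toMatrix₂' hL] using hsymm _ _
  · have hquad : star w ⬝ᵥ (hessianMatrix L x *ᵥ w) = B w w := by
      rw [hessianMatrix_eq_toMatrix₂' hL, star_trivial, ← Matrix.toLinearMap₂'_apply',
        Matrix.toLinearMap₂'_toMatrix']
      rfl
    rw [neg_mulVec, dotProduct_neg, hquad, neg_nonneg]
    exact hc.fderiv_fderiv_apply_self_nonpos (hL.differentiable (by simp))
      ((hL.fderiv_right (m := 1) le_rfl).differentiable one_ne_zero x) w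

end Hessian

section Curvature

variable {ι : Type*} [Fintype ι] {r : ℕ} {g : (ι → ℝ) → Matrix (Fin r) (Fin r) ℂ}
  {f : (ι → ℝ) → ℝ}

lemma IsMetric.differentiableAt_apply (hg : IsMetric g) (a b : Fin r) (x : ι → ℝ) :
    DifferentiableAt ℝ (fun y => g y a b) x :=
  (hg.2 a b).differentiable two_ne_zero x

variable [DecidableEq ι]

lemma IsMetric.differentiableAt_mpd_apply (hg : IsMetric g) (j : ι) (a b : Fin r) (x : ι → ℝ) :
    DifferentiableAt ℝ (fun y => mpd j g y a b) x :=
  ((hg.2 a b).pdC_succ j).differentiable one_ne_zero x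

lemma ofReal_smul_inv_mul_mpd (hg : IsMetric g) (hf : Differentiable ℝ f) (hfpos : ∀ x, 0 < f x)
    (j : ι) (x : ι → ℝ) :
    ((f x : ℂ) • g x)⁻¹ * mpd j (fun y => (f y : ℂ) • g y) x =
      (pdR j (fun y => Real.log (f y)) x : ℂ) • 1 + (g x)⁻¹ * mpd j g x := by
  have hfx : (f x : ℂ) ≠ 0 := Complex.ofReal_ne_zero.mpr (hfpos x).ne'
  have hgx : IsUnit (g x).det := (hg.1 x).det_pos.ne'.isUnit
  have := invertibleOfNonzero hfx
  rw [Matrix.inv_smul _ _ hgx, invOf_eq_inv,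
    mpd_ofReal_smul j (hf x) (fun a b => hg.differentiableAt_apply a b x),
    pdR_log j (hf x) (hfpos x).ne', mul_add, smul_mul_smul, smul_mul_smul,
    nonsing_inv_mul _ hgx, inv_mul_cancel₀ hfx, one_smul, Complex.ofReal_div, div_eq_inv_mul]

theorem Theta_ofReal_smul (hg : IsMetric g) (hfpos : ∀ x, 0 < f x) (hf : ContDiff ℝ 2 f)
    (j k : ι) (x : ι → ℝ) :
    Theta (fun y => (f y : ℂ) • g y) j k x =
      Theta g j k x + (hessianMatrix (fun y => Real.log (f y)) x j k : ℂ) • 1 := by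
  have hlog : ContDiff ℝ 2 fun y => Real.log (f y) := hf.log fun y => (hfpos y).ne'
  have hgInv : ∀ a b, DifferentiableAt ℝ (fun y => ((g y)⁻¹ * mpd j g y) a b) x :=
    .matrix_mul_apply (.matrix_inv_apply (fun a b => hg.differentiableAt_apply a b x)
      (hg.1 x).det_pos.ne') fun a b => hg.differentiableAt_mpd_apply j a b x
  have hdlog : DifferentiableAt ℝ (pdR j fun y => Real.log (f y)) x :=
    (hlog.pdR_succ j).differentiable one_ne_zero x
  unfold Theta
  rw [funext (ofReal_smul_inv_mul_mpd hg (hf.differentiable two_ne_zero) hfpos j),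
    mpd_add k (fun a b => ?_) hgInv, mpd_ofReal_smul_one k hdlog, add_comm]
  · rfl
  · simp only [Matrix.smul_apply, smul_eq_mul]
    exact (Complex.ofRealCLM.differentiableAt.comp x hdlog).mul_const _

end Curvature

section CurvatureForm

variable {ι : Type*} [Fintype ι] [DecidableEq ι] {r : ℕ}

noncomputable def curvatureForm (g : (ι → ℝ) → Matrix (Fin r) (Fin r) ℂ) (x : ι → ℝ)
    (u : ι → Fin r → ℂ) : ℂ :=
  ∑ j, ∑ k, ip (g x) ((Theta g j k x).mulVec (u j)) (u k)

lemma curvatureForm_smul_const (g : (ι → ℝ) → Matrix (Fin r) (Fin r) ℂ) (x : ι → ℝ)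
    (u : Fin r → ℂ) (v : ι → ℂ) :
    curvatureForm g x (fun j => v j • u) =
      ∑ j, ∑ k, ip (g x) ((Theta g j k x).mulVec u) u * (v j * star (v k)) := by
  refine Finset.sum_congr rfl fun j _ => Finset.sum_congr rfl fun k _ => ?_
  simp only [ip, mulVec_smul, star_smul, smul_dotProduct, dotProduct_smul, smul_eq_mul]
  ring

variable {g : (ι → ℝ) → Matrix (Fin r) (Fin r) ℂ} {f : (ι → ℝ) → ℝ}

lemma curvatureForm_ofReal_smul (hg : IsMetric g) (hfpos : ∀ x, 0 < f x) (hf : ContDiff ℝ 2 f)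
    (x : ι → ℝ) (u : ι → Fin r → ℂ) :
    curvatureForm (fun y => (f y : ℂ) • g y) x u =
      (f x : ℂ) * (curvatureForm g x u +
        ∑ j, ∑ k, (hessianMatrix (fun y => Real.log (f y)) x j k : ℂ) * ip (g x) (u j) (u k)) := by
  simp only [curvatureForm, ← Finset.sum_add_distrib, Finset.mul_sum]
  refine Finset.sum_congr rfl fun j _ => Finset.sum_congr rfl fun k _ => ?_
  simp only [Theta_ofReal_smul hg hfpos hf, ip, add_mulVec, smul_mulVec, one_mulVec, mulVec_add,
    mulVec_smul, dotProduct_add, dotProduct_smul, smul_eq_mul]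
  ring

lemma curvatureForm_ofReal_smul_nonpos (hg : IsMetric g) (hfpos : ∀ x, 0 < f x)
    (hf : ContDiff ℝ 2 f) (hflc : ConcaveOn ℝ Set.univ fun x => Real.log (f x))
    (x : ι → ℝ) (u : ι → Fin r → ℂ) (hgu : curvatureForm g x u ≤ 0) :
    curvatureForm (fun y => (f y : ℂ) • g y) x u ≤ 0 := by
  have hH := sum_sum_mul_ip_nonneg
    (hflc.posSemidef_neg_hessianMatrix (hf.log fun y => (hfpos y).ne') x).transpose.map_ofReal
    (hg.1 x).posSemidef u
  simp only [map_apply, transpose_apply, Matrix.neg_apply, Complex.ofReal_neg, neg_mul,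
    Finset.sum_neg_distrib, neg_nonneg] at hH
  rw [curvatureForm_ofReal_smul hg hfpos hf]
  exact mul_nonpos_of_nonneg_of_nonpos (Complex.zero_le_real.mpr (hfpos x).le) (add_nonpos hgu hH)

end CurvatureForm

theorem statement6 {n r : ℕ} (g : (Fin n → ℝ) → Matrix (Fin r) (Fin r) ℂ)
    (hg : IsMetric g) (f : (Fin n → ℝ) → ℝ) (hfpos : ∀ x, 0 < f x)
    (hfC : ContDiff ℝ 2 f) (hflc : ConcaveOn ℝ Set.univ fun x => Real.log (f x)) :
    (NakanoLogConcave g → NakanoLogConcave fun x => (f x : ℂ) • g x) ∧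
    (GriffithsLogConcave g → GriffithsLogConcave fun x => (f x : ℂ) • g x) := by
  refine ⟨fun hN x u => curvatureForm_ofReal_smul_nonpos hg hfpos hfC hflc x u (hN x u),
    fun hG x u v => ?_⟩
  rw [← curvatureForm_smul_const (fun y => (f y : ℂ) • g y)]
  exact curvatureForm_ofReal_smul_nonpos hg hfpos hfC hflc x _
    ((curvatureForm_smul_const g x u v).trans_le (hG x u v))
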